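/- arXiv:2509.26243 — 5 statements merged into one kernel-verified Lean document; each statement's English description precedes it below -/
import Mathlib

section
/- Let n ≥ 2 be an integer and let ρ be a real number with −1/(n−1) ≤ ρ ≤ 1. Then every complex zero of the polynomial p(z) = z^n + 2ρ·Σ_{i=1}^{n−1} z^i + 1 lies on the unit circle, i.e., every z ∈ ℂ with p(z) = 0 satisfies |z| = 1. -/
/-!
For `ρ = 1` we have `(z - 1) p(z) = (z + 1)(z ^ n - 1)`. Otherwise we exhibit `n` roots of `p`
on the unit circle, counted with multiplicity; as `deg p = n`, they are all of them. Since `p` is self-reciprocal, `F(θ) = e^{-inθ/2} p(e^{iθ})` is real; at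
`θ = 2πk/n` it equals `(-1)^k (2 - 2ρ)` for `0 < k < n` and `(-1)^k · 2(1 + ρ(n - 1))` for
`k = 0, n`. For `ρ > -1/(n - 1)` the intermediate value theorem yields `n` zeros of `F` in
`[0, 2π)`. At `ρ = -1/(n - 1)`, `z = 1` is a double root and the `n - 2` sign changes of `F` on
`[2π/n, 2π(n - 1)/n]` provide the remaining roots.
-/

open Polynomial Finset Real

theorem Finset.add_sum_Icc_one_sub_one {M : Type*} [AddCommMonoid M] {n : ℕ} (hn : 1 ≤ n)
    (f : ℕ → M) : f 0 + ∑ i ∈ Icc 1 (n - 1), f i = ∑ i ∈ range n, f i := by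
  rw [Icc_sub_one_right_eq_Ico_of_not_isMin (by simp; omega), range_eq_Ico,
    sum_eq_sum_Ico_succ_bot hn]

theorem Polynomial.roots_eq_of_le_of_natDegree_le {R : Type*} [CommRing R] [IsDomain R]
    {p : R[X]} {s : Multiset R} (hs : s ≤ p.roots) (hcard : p.natDegree ≤ Multiset.card s) :
    p.roots = s :=
  (Multiset.eq_of_le_of_card_le hs ((card_roots' p).trans hcard)).symm

theorem exists_zeros_of_mul_neg {f : ℝ → ℝ} (hf : Continuous f) {x : ℕ → ℝ} (hx : Monotone x)
    {m : ℕ} (hsign : ∀ k < m, f (x k) * f (x (k + 1)) < 0) :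
    ∃ θ : ℕ → ℝ, ∀ k < m, θ k ∈ Set.Ioo (x k) (x (k + 1)) ∧ f (θ k) = 0 := by
  have hivt : ∀ k < m, ∃ t ∈ Set.Ioo (x k) (x (k + 1)), f t = 0 := fun k hk => by
    have hle := hx k.le_succ
    rcases mul_neg_iff.1 (hsign k hk) with ⟨ha, hb⟩ | ⟨ha, hb⟩
    exacts [intermediate_value_Ioo' hle hf.continuousOn ⟨hb, ha⟩,
      intermediate_value_Ioo hle hf.continuousOn ⟨ha, hb⟩]
  choose! θ hθ using hivt
  exact ⟨θ, hθ⟩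

theorem mul_neg_of_neg_one_pow_mul_pos {a b : ℝ} (k : ℕ) (ha : 0 < (-1) ^ k * a)
    (hb : 0 < (-1) ^ (k + 1) * b) : a * b < 0 := by
  have hsq : ((-1 : ℝ) ^ k) ^ 2 = 1 := by rw [← pow_mul, pow_mul', neg_one_sq, one_pow]
  have hab : a * b = -(((-1) ^ k * a) * ((-1) ^ (k + 1) * b)) := by
    rw [pow_succ]
    linear_combination (-(a * b)) * hsq
  rw [hab]
  exact neg_neg_of_pos (mul_pos ha hb)

theorem Circle.exp_ne_one_of_mem_Ioo {θ : ℝ} (hθ : θ ∈ Set.Ioo 0 (2 * π)) :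
    Circle.exp θ ≠ 1 := by
  intro h
  rw [← Circle.exp_zero] at h
  exact hθ.1.ne' <| Circle.exp_injOn_Ico (by simp) ⟨hθ.1.le, hθ.2⟩ ⟨le_rfl, two_pi_pos⟩ h

theorem Circle.exp_two_pi_mul_div_pow {n : ℕ} (hn : n ≠ 0) (k : ℕ) :
    Circle.exp (2 * π * k / n) ^ n = 1 := by
  rw [← Circle.exp_natCast_mul, show (n : ℝ) * (2 * π * k / n) = k * (2 * π) by field_simp,
    Circle.exp_natCast_mul, Circle.exp_two_pi, one_pow]

noncomputable def rhoPoly (n : ℕ) (ρ : ℝ) : ℂ[X] :=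
  X ^ n + (C (2 * (ρ : ℂ)) * ∑ i ∈ Icc 1 (n - 1), X ^ i + 1)

namespace rhoPoly

variable {n : ℕ}

theorem eval_eq (ρ : ℝ) (z : ℂ) :
    (rhoPoly n ρ).eval z = z ^ n + 2 * (ρ : ℂ) * ∑ i ∈ Icc 1 (n - 1), z ^ i + 1 := by
  simp [rhoPoly, eval_finsetSum, add_assoc]

theorem natDegree_eq (hn : 1 ≤ n) (ρ : ℝ) : (rhoPoly n ρ).natDegree = n := by
  have hlow : (C (2 * (ρ : ℂ)) * ∑ i ∈ Icc 1 (n - 1), X ^ i + 1).degree < (n : WithBot ℕ) := by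
    rw [degree_lt_iff_coeff_zero]
    intro m hm
    simp only [coeff_add, coeff_C_mul, finsetSum_coeff, coeff_X_pow, coeff_one]
    rw [sum_eq_zero fun i hi => if_neg (by simp at hi; omega), if_neg (by omega)]
    simp
  rw [rhoPoly, natDegree_add_eq_left_of_degree_lt (by simpa using hlow), natDegree_X_pow]

theorem ne_zero (hn : 1 ≤ n) (ρ : ℝ) : rhoPoly n ρ ≠ 0 := by
  intro h
  have := natDegree_eq hn ρ
  rw [h, natDegree_zero] at this
  omega

theorem sub_one_mul_eval (hn : 1 ≤ n) (ρ : ℝ) (z : ℂ) :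
    (z - 1) * (rhoPoly n ρ).eval z
      = z ^ (n + 1) + (2 * ρ - 1) * z ^ n - (2 * ρ - 1) * z - 1 := by
  have hsum := add_sum_Icc_one_sub_one hn (z ^ ·)
  simp only [pow_zero] at hsum
  rw [eval_eq]
  linear_combination (2 * (ρ : ℂ) * (z - 1)) * hsum + 2 * (ρ : ℂ) * geom_sum_mul z n

theorem eval_one (hn : 1 ≤ n) (ρ : ℝ) :
    (rhoPoly n ρ).eval 1 = ((2 * (1 + ρ * (n - 1)) : ℝ) : ℂ) := by
  simp [eval_eq, Nat.cast_sub hn]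
  ring

theorem eval_derivative_one (hn : 1 ≤ n) (ρ : ℝ) :
    (derivative (rhoPoly n ρ)).eval 1 = ((n * (1 + ρ * (n - 1)) : ℝ) : ℂ) := by
  have hgauss := sum_range_id_mul_two n
  rw [← add_sum_Icc_one_sub_one hn, zero_add] at hgauss
  have hgaussC := congrArg (Nat.cast : ℕ → ℂ) hgauss
  push_cast [Nat.cast_sub hn] at hgaussC
  simp [rhoPoly, eval_finsetSum, derivative_X_pow]
  linear_combination (ρ : ℂ) * hgaussC

theorem eval_of_pow_eq_one (hn : 1 ≤ n) (ρ : ℝ) {c : ℂ} (hc : c ^ n = 1) (hc1 : c ≠ 1) :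
    (rhoPoly n ρ).eval c = ((2 - 2 * ρ : ℝ) : ℂ) := by
  refine mul_left_cancel₀ (sub_ne_zero.2 hc1) ?_
  rw [sub_one_mul_eval hn, pow_succ, hc]
  push_cast
  ring

theorem conj_eval (ρ : ℝ) (z : ℂ) :
    starRingEnd ℂ ((rhoPoly n ρ).eval z) = (rhoPoly n ρ).eval (starRingEnd ℂ z) := by
  simp [eval_eq, map_ofNat]

theorem pow_mul_eval_inv (hn : 1 ≤ n) (ρ : ℝ) {z : ℂ} (hz : z ≠ 0) :
    z ^ n * (rhoPoly n ρ).eval z⁻¹ = (rhoPoly n ρ).eval z := by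
  rcases eq_or_ne z 1 with rfl | hz1
  · simp
  refine mul_left_cancel₀ (sub_ne_zero.2 hz1) ?_
  have h := sub_one_mul_eval hn ρ z⁻¹
  have hpow (k : ℕ) : (z * z⁻¹) ^ k = 1 := by rw [mul_inv_cancel₀ hz, one_pow]
  rw [sub_one_mul_eval hn]
  -- `z ^ (n + 1)` times the identity at `z⁻¹` is minus the identity at `z`
  linear_combination (-z ^ (n + 1)) * h
    + (z ^ n * (rhoPoly n ρ).eval z⁻¹ + (2 * ρ - 1) * z ^ n) * hpow 1
    - hpow (n + 1) - (2 * ρ - 1) * z * hpow n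

theorem sq_dvd_of_eq_zero (hn : 1 ≤ n) {ρ : ℝ} (hρ : 1 + ρ * (n - 1) = 0) :
    (X - C 1) ^ 2 ∣ rhoPoly n ρ := by
  rw [← le_rootMultiplicity_iff (ne_zero hn ρ)]
  refine (one_lt_rootMultiplicity_iff_isRoot (ne_zero hn ρ)).2 ⟨?_, ?_⟩
  · simp [IsRoot, eval_one hn, hρ]
  · simp [IsRoot, eval_derivative_one hn, hρ]

theorem norm_eq_one_of_isRoot_one (hn : 1 ≤ n) {z : ℂ} (hz : (rhoPoly n 1).IsRoot z) :
    ‖z‖ = 1 := by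
  have h := sub_one_mul_eval hn 1 z
  rw [hz.eq_zero, mul_zero] at h
  have hfactor : (z + 1) * (z ^ n - 1) = 0 := by
    push_cast at h
    linear_combination -h
  rcases mul_eq_zero.1 hfactor with h | h
  · simp [eq_neg_of_add_eq_zero_left h]
  · exact Complex.norm_eq_one_of_pow_eq_one (sub_eq_zero.1 h) (by omega)

end rhoPoly

noncomputable def circleProfile (n : ℕ) (ρ θ : ℝ) : ℝ :=
  ((Circle.exp (-(n * θ / 2)) : ℂ) * (rhoPoly n ρ).eval (Circle.exp θ : ℂ)).re

namespace circleProfile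

variable {n : ℕ} {ρ : ℝ}

theorem ofReal_eq (hn : 1 ≤ n) (ρ θ : ℝ) :
    (circleProfile n ρ θ : ℂ)
      = (Circle.exp (-(n * θ / 2)) : ℂ) * (rhoPoly n ρ).eval (Circle.exp θ : ℂ) := by
  refine Complex.conj_eq_iff_re.1 ?_
  set u := Circle.exp θ
  set v := Circle.exp (-(n * θ / 2))
  have hphase : v⁻¹ * u⁻¹ ^ n = v := by
    rw [← Circle.exp_neg, ← Circle.exp_neg, ← Circle.exp_natCast_mul, ← Circle.exp_add]
    congr 1
    ring
  have hreflect : (rhoPoly n ρ).eval ↑u⁻¹ = ↑(u⁻¹ ^ n) * (rhoPoly n ρ).eval ↑u := by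
    simpa using (rhoPoly.pow_mul_eval_inv hn ρ u⁻¹.coe_ne_zero).symm
  rw [map_mul, rhoPoly.conj_eval, ← Circle.coe_inv_eq_conj, ← Circle.coe_inv_eq_conj,
    hreflect, ← mul_assoc, ← Circle.coe_mul, hphase]

theorem continuous (n : ℕ) (ρ : ℝ) : Continuous (circleProfile n ρ) := by
  unfold circleProfile
  fun_prop

theorem isRoot_of_eq_zero (hn : 1 ≤ n) {θ : ℝ} (h : circleProfile n ρ θ = 0) :
    (rhoPoly n ρ).IsRoot (Circle.exp θ) := by
  have := ofReal_eq hn ρ θ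
  rw [h, Complex.ofReal_zero, eq_comm, mul_eq_zero] at this
  exact this.resolve_left (Circle.coe_ne_zero _)

theorem neg_one_pow_mul_grid (hn : 1 ≤ n) (ρ : ℝ) (k : ℕ) :
    (-1) ^ k * circleProfile n ρ (2 * π * k / n)
      = ((rhoPoly n ρ).eval (Circle.exp (2 * π * k / n) : ℂ)).re := by
  have hphase : (Circle.exp (-(n * (2 * π * k / n) / 2)) : ℂ) = ((-1 : ℝ) ^ k : ℝ) := by
    have : -(n * (2 * π * k / n) / 2) = k * (-π) := by field_simp
    rw [this, Circle.exp_natCast_mul, Circle.coe_pow, Circle.coe_exp]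
    push_cast
    rw [neg_mul, Complex.exp_neg_pi_mul_I]
  rw [circleProfile, hphase, Complex.re_ofReal_mul, ← mul_assoc, ← mul_pow]
  norm_num

theorem neg_one_pow_mul_grid_pos (hn : 1 ≤ n) (hρ₁ : 0 < 1 + ρ * (n - 1)) (hρ₂ : ρ < 1)
    (k : ℕ) : 0 < (-1) ^ k * circleProfile n ρ (2 * π * k / n) := by
  rw [neg_one_pow_mul_grid hn]
  have hc : (Circle.exp (2 * π * k / n) : ℂ) ^ n = 1 := by
    rw [← Circle.coe_pow, Circle.exp_two_pi_mul_div_pow (by omega), Circle.coe_one]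
  by_cases hc1 : (Circle.exp (2 * π * k / n) : ℂ) = 1
  · rw [hc1, rhoPoly.eval_one hn, Complex.ofReal_re]
    linarith
  · rw [rhoPoly.eval_of_pow_eq_one hn ρ hc hc1, Complex.ofReal_re]
    linarith

theorem neg_one_pow_mul_grid_pos_of_lt (hρ : ρ < 1) {k : ℕ} (hk₀ : 0 < k) (hk : k < n) :
    0 < (-1) ^ k * circleProfile n ρ (2 * π * k / n) := by
  have hn : 1 ≤ n := by omega
  rw [neg_one_pow_mul_grid hn]
  have hc : (Circle.exp (2 * π * k / n) : ℂ) ^ n = 1 := by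
    rw [← Circle.coe_pow, Circle.exp_two_pi_mul_div_pow (by omega), Circle.coe_one]
  have hc1 : (Circle.exp (2 * π * k / n) : ℂ) ≠ 1 := by
    rw [Ne, Circle.coe_eq_one]
    refine Circle.exp_ne_one_of_mem_Ioo ⟨by positivity, ?_⟩
    rw [div_lt_iff₀ (by positivity)]
    have : (k : ℝ) < n := by exact_mod_cast hk
    nlinarith [pi_pos]
  rw [rhoPoly.eval_of_pow_eq_one hn ρ hc hc1, Complex.ofReal_re]
  linarith

end circleProfile

namespace rhoPoly

variable {n : ℕ} {ρ : ℝ}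

theorem exists_nodup_roots_of_mul_neg (hn : 1 ≤ n) {x : ℕ → ℝ} (hx : Monotone x) {m : ℕ}
    (hlen : x m ≤ x 0 + 2 * π)
    (hsign : ∀ k < m, circleProfile n ρ (x k) * circleProfile n ρ (x (k + 1)) < 0) :
    ∃ s : Multiset ℂ, s.Nodup ∧ Multiset.card s = m ∧
      ∀ w ∈ s, (rhoPoly n ρ).IsRoot w ∧ ∃ θ ∈ Set.Ioo (x 0) (x m), w = Circle.exp θ := by
  obtain ⟨θ, hθ⟩ := exists_zeros_of_mul_neg (circleProfile.continuous n ρ) hx hsign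
  have hmem : ∀ k < m, θ k ∈ Set.Ioo (x 0) (x m) := fun k hk =>
    ⟨(hx k.zero_le).trans_lt (hθ k hk).1.1, (hθ k hk).1.2.trans_le (hx hk)⟩
  have hmono : StrictMonoOn θ (Set.Iio m) := fun k hk l hl hkl =>
    (hθ k hk).1.2.trans ((hx hkl).trans_lt (hθ l hl).1.1)
  have hinj : Set.InjOn (fun k => (Circle.exp (θ k) : ℂ)) (Set.Iio m) :=
    Circle.coe_injective.comp_injOn <| (Circle.exp_injOn_Ico (by simp)).comp hmono.injOn
      fun k hk => ⟨(hmem k hk).1.le, (hmem k hk).2.trans_le hlen⟩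
  refine ⟨(Multiset.range m).map fun k => (Circle.exp (θ k) : ℂ),
    (Multiset.nodup_range m).map_on fun k hk l hl => hinj (by simpa using hk) (by simpa using hl),
    by simp, ?_⟩
  simp only [Multiset.mem_map, Multiset.mem_range]
  rintro w ⟨k, hk, rfl⟩
  exact ⟨circleProfile.isRoot_of_eq_zero hn (hθ k hk).2, θ k, hmem k hk, rfl⟩

theorem norm_eq_one_of_isRoot_of_pos (hn : 1 ≤ n) (hρ₁ : 0 < 1 + ρ * (n - 1)) (hρ₂ : ρ < 1)
    {z : ℂ} (hz : (rhoPoly n ρ).IsRoot z) : ‖z‖ = 1 := by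
  have hgrid := circleProfile.neg_one_pow_mul_grid_pos hn hρ₁ hρ₂
  obtain ⟨s, hnodup, hcard, hs⟩ := exists_nodup_roots_of_mul_neg hn
    (x := fun k : ℕ => 2 * π * k / n) (m := n) (fun k l hkl => by dsimp only; gcongr)
    (by simp [field]) fun k _ => mul_neg_of_neg_one_pow_mul_pos k (hgrid k) (hgrid (k + 1))
  have hroots : (rhoPoly n ρ).roots = s :=
    roots_eq_of_le_of_natDegree_le
      ((Multiset.le_iff_subset hnodup).2 fun w hw => (mem_roots (ne_zero hn ρ)).2 (hs w hw).1)
      (by rw [natDegree_eq hn, hcard])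
  obtain ⟨-, θ, -, rfl⟩ := hs z (hroots ▸ (mem_roots (ne_zero hn ρ)).2 hz)
  exact Circle.norm_coe _

theorem exists_nodup_roots_ne_one (hn : 2 ≤ n) (hρ : ρ < 1) :
    ∃ t : Multiset ℂ, t.Nodup ∧ Multiset.card t = n - 2 ∧
      ∀ w ∈ t, (rhoPoly n ρ).IsRoot w ∧ w ≠ 1 ∧ ‖w‖ = 1 := by
  have hgrid k (hk₀ : 0 < k) (hk : k < n) :=
    circleProfile.neg_one_pow_mul_grid_pos_of_lt hρ hk₀ hk
  have hlast : 2 * π * ((n - 2 + 1 : ℕ) : ℝ) / n ≤ 2 * π := by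
    rw [div_le_iff₀ (by positivity)]
    have : ((n - 2 + 1 : ℕ) : ℝ) ≤ n := by exact_mod_cast (by omega : n - 2 + 1 ≤ n)
    nlinarith [pi_pos]
  obtain ⟨t, hnodup, hcard, ht⟩ := exists_nodup_roots_of_mul_neg (by omega)
    (x := fun k : ℕ => 2 * π * ((k + 1 : ℕ) : ℝ) / n) (m := n - 2)
    (fun k l hkl => by dsimp only; gcongr) (hlast.trans (by simp; positivity)) fun k hk =>
      mul_neg_of_neg_one_pow_mul_pos (k + 1) (hgrid (k + 1) (by omega) (by omega))
        (hgrid (k + 2) (by omega) (by omega))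
  refine ⟨t, hnodup, hcard, fun w hw => ?_⟩
  obtain ⟨hroot, θ, hθ, rfl⟩ := ht w hw
  refine ⟨hroot, Circle.coe_eq_one.not.2 <| Circle.exp_ne_one_of_mem_Ioo ?_, Circle.norm_coe _⟩
  exact ⟨(by positivity : (0 : ℝ) < _).trans hθ.1, hθ.2.trans_le hlast⟩

theorem norm_eq_one_of_isRoot_of_eq_zero (hn : 2 ≤ n) (hρ : 1 + ρ * (n - 1) = 0)
    {z : ℂ} (hz : (rhoPoly n ρ).IsRoot z) : ‖z‖ = 1 := by
  have hn₁ : 1 ≤ n := by omega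
  have hP := ne_zero hn₁ ρ
  have hρ₂ : ρ < 1 := by
    have : (2 : ℝ) ≤ n := by exact_mod_cast hn
    nlinarith
  obtain ⟨g, hg⟩ := sq_dvd_of_eq_zero hn₁ hρ
  have hg₀ : g ≠ 0 := by
    rintro rfl
    exact hP (by simpa using hg)
  obtain ⟨t, hnodup, hcard, ht⟩ := exists_nodup_roots_ne_one hn hρ₂
  have ht_roots : t ≤ g.roots := (Multiset.le_iff_subset hnodup).2 fun w hw => by
    obtain ⟨hroot, hw1, -⟩ := ht w hw
    rw [IsRoot, hg, eval_mul, eval_pow, eval_sub, eval_X, eval_C, mul_eq_zero] at hroot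
    exact (mem_roots hg₀).2 (hroot.resolve_left (pow_ne_zero 2 (sub_ne_zero.2 hw1)))
  have hroots : (rhoPoly n ρ).roots = 2 • {1} + t := by
    refine roots_eq_of_le_of_natDegree_le ?_ (by simp [natDegree_eq hn₁, hcard]; omega)
    rw [hg, roots_mul (hg ▸ hP), roots_pow, roots_X_sub_C]
    exact add_le_add_right ht_roots _
  rcases Multiset.mem_add.1 (hroots ▸ (mem_roots hP).2 hz) with h | h
  · rw [show z = 1 by simpa using h, norm_one]
  · exact (ht z h).2.2

end rhoPoly

/-- For an integer `n ≥ 2` and a real `ρ` with `-1/(n-1) ≤ ρ ≤ 1`,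
every complex zero of `p(z) = z^n + 2ρ·Σ_{i=1}^{n-1} z^i + 1` lies on the unit circle. -/
theorem zeros_on_unit_circle (n : ℕ) (hn : 2 ≤ n) (ρ : ℝ)
    (hρ₁ : -(1 / ((n : ℝ) - 1)) ≤ ρ) (hρ₂ : ρ ≤ 1) (z : ℂ)
    (hz : z ^ n + 2 * (ρ : ℂ) * ∑ i ∈ Finset.Icc 1 (n - 1), z ^ i + 1 = 0) :
    ‖z‖ = 1 := by
  have hroot : (rhoPoly n ρ).IsRoot z := by rwa [IsRoot, rhoPoly.eval_eq]
  have hρ₀ : 0 ≤ 1 + ρ * (n - 1) := by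
    have : (2 : ℝ) ≤ n := by exact_mod_cast hn
    rw [neg_le, le_div_iff₀ (by linarith)] at hρ₁
    linarith
  rcases hρ₂.eq_or_lt with rfl | hρ₂
  · exact rhoPoly.norm_eq_one_of_isRoot_one (by omega) hroot
  rcases hρ₀.eq_or_lt with hρ₀ | hρ₀
  · exact rhoPoly.norm_eq_one_of_isRoot_of_eq_zero hn hρ₀.symm hroot
  · exact rhoPoly.norm_eq_one_of_isRoot_of_pos (by omega) hρ₀ hρ₂ hroot
end

section
/- Let n ≥ 3 be a prime, η = e^{2π√−1/n}, and ρ = −1/(n−1). Then for the polynomial p(z) = z^n + 2ρ·Σ_{i=1}^{n−1} z^i + 1: both 1 and −1 are zeros of p, every complex zero of p lies on the unit circle, and no primitive n-th root of unity η^k (k ∈ {1, …, n−1}) is a zero of p. -/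
/-!
For `ρ = -1/(n-1)`, multiplying `p` by `z - 1` shows that a zero `z` with `z ^ n ≠ 1` satisfies
`(z + 1)/(z - 1) = n (z^n + 1)/(z^n - 1)`, and the right side is `∑ₖ (z + ηᵏ)/(z - ηᵏ)` (logarithmic
derivative of `zⁿ - 1`). Dropping the term `k = 0` leaves `∑_{k ≠ 0} (z + ηᵏ)/(z - ηᵏ) = 0`, whose
real part is `(|z|² - 1) ∑_{k ≠ 0} |z - ηᵏ|⁻²`, so `|z| = 1`. At an `n`-th root of unity `w ≠ 1`
the geometric sum collapses and `p(w) = 2 - 2ρ > 0`.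
-/

open Finset Polynomial

def palindromicEval {R : Type*} [CommRing R] (n : ℕ) (ρ z : R) : R :=
  z ^ n + 2 * ρ * ∑ i ∈ Icc 1 (n - 1), z ^ i + 1

section CommRing

variable {R : Type*} [CommRing R] {n : ℕ}

lemma sum_Icc_one_pow_eq_geom_sum_sub_one (hn : 1 ≤ n) (z : R) :
    ∑ i ∈ Icc 1 (n - 1), z ^ i = ∑ i ∈ range n, z ^ i - 1 := by
  obtain ⟨m, rfl⟩ := Nat.exists_eq_add_of_le' hn
  rw [Icc_sub_one_right_eq_Ico_of_not_isMin (by simp), sum_Ico_eq_sum_range, sum_range_succ',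
    pow_zero, add_sub_cancel_right, Nat.add_sub_cancel]
  simp_rw [add_comm 1]

lemma palindromicEval_one (hn : 1 ≤ n) (ρ : R) :
    palindromicEval n ρ 1 = 2 + 2 * ρ * (n - 1) := by
  rw [palindromicEval, sum_Icc_one_pow_eq_geom_sum_sub_one hn]
  simp only [one_pow, sum_const, card_range, nsmul_eq_mul, mul_one]
  ring

lemma palindromicEval_neg_one (hn : Odd n) (ρ : R) : palindromicEval n ρ (-1) = 0 := by
  simp [palindromicEval, sum_Icc_one_pow_eq_geom_sum_sub_one hn.pos, neg_one_geom_sum,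
    Nat.not_even_iff_odd.2 hn, hn.neg_one_pow]

lemma palindromicEval_mul_sub_one (hn : 1 ≤ n) (ρ z : R) :
    palindromicEval n ρ z * (z - 1) = (z ^ n + 1) * (z - 1) + 2 * ρ * (z ^ n - z) := by
  rw [palindromicEval, sum_Icc_one_pow_eq_geom_sum_sub_one hn]
  linear_combination 2 * ρ * geom_sum_mul z n

lemma palindromicEval_of_pow_eq_one [IsDomain R] (hn : 1 ≤ n) (ρ : R) {z : R} (hz : z ^ n = 1)
    (hz1 : z ≠ 1) : palindromicEval n ρ z = 2 - 2 * ρ := by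
  have hgeom : ∑ i ∈ range n, z ^ i = 0 := by
    simpa [hz, sub_eq_zero, hz1] using geom_sum_mul z n
  rw [palindromicEval, sum_Icc_one_pow_eq_geom_sum_sub_one hn, hgeom, hz]
  ring

end CommRing

section Field

variable {K : Type*} [Field K] {n : ℕ} {ζ z : K}

lemma IsPrimitiveRoot.sum_inv_sub_pow (hζ : IsPrimitiveRoot ζ n) (hz : z ^ n ≠ 1) :
    ∑ k ∈ range n, (z - ζ ^ k)⁻¹ = n * z ^ (n - 1) / (z ^ n - 1) := by
  have hsplit := X_pow_sub_one_splits hζ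
  have heval : (X ^ n - C (1 : K)).eval z ≠ 0 := by simpa [sub_eq_zero] using hz
  have := hsplit.eval_derivative_div_eval_of_ne_zero heval
  rw [← nthRoots, hζ.nthRoots_eq (one_pow n)] at this
  simpa [Multiset.map_map, Function.comp_def, ← sum_map_val, derivative_X_pow] using this.symm

lemma IsPrimitiveRoot.sum_add_div_sub_pow (hζ : IsPrimitiveRoot ζ n) (hz : z ^ n ≠ 1) :
    ∑ k ∈ range n, (z + ζ ^ k) / (z - ζ ^ k) = n * (z ^ n + 1) / (z ^ n - 1) := by
  have hne : ∀ k, z - ζ ^ k ≠ 0 := fun k h => hz <| by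
    rw [sub_eq_zero.1 h, pow_right_comm, hζ.pow_eq_one, one_pow]
  have hterm : ∀ k, (z + ζ ^ k) / (z - ζ ^ k) = 2 * z * (z - ζ ^ k)⁻¹ - 1 := fun k => by
    field_simp [hne k]; ring
  simp only [hterm, sum_sub_distrib, ← mul_sum, hζ.sum_inv_sub_pow hz, sum_const, card_range]
  have hn : n ≠ 0 := by rintro rfl; exact hz (pow_zero z)
  field_simp [sub_ne_zero.2 hz]
  linear_combination (2 * n : K) * mul_pow_sub_one hn z

end Field

namespace Complex

lemma re_add_div_sub {z w : ℂ} (hw : ‖w‖ = 1) :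
    ((z + w) / (z - w)).re = (‖z‖ ^ 2 - 1) / ‖z - w‖ ^ 2 := by
  have hw' : normSq w = 1 := by rw [normSq_eq_norm_sq, hw, one_pow]
  rw [div_re, ← add_div, ← normSq_eq_norm_sq, ← normSq_eq_norm_sq, ← hw']
  congr 1
  simp only [normSq_apply, add_re, sub_re, add_im, sub_im]
  ring

lemma norm_eq_one_of_sum_add_div_sub_eq_zero {ι : Type*} {s : Finset ι} (hs : s.Nonempty)
    {w : ι → ℂ} (hw : ∀ i ∈ s, ‖w i‖ = 1) {z : ℂ}
    (h : ∑ i ∈ s, (z + w i) / (z - w i) = 0) : ‖z‖ = 1 := by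
  by_contra hz
  have hpos : 0 < ∑ i ∈ s, (‖z - w i‖ ^ 2)⁻¹ := by
    refine sum_pos (fun i hi => ?_) hs
    have : z - w i ≠ 0 := fun h0 => hz (by rw [sub_eq_zero.1 h0, hw i hi])
    positivity
  have hre : (‖z‖ ^ 2 - 1) * ∑ i ∈ s, (‖z - w i‖ ^ 2)⁻¹ = 0 := by
    have := congrArg re h
    rw [re_sum, sum_congr rfl fun i hi => re_add_div_sub (hw i hi)] at this
    simpa [mul_sum, div_eq_mul_inv] using this
  have hz2 : ‖z‖ ^ 2 - 1 ≠ 0 := by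
    rwa [sub_ne_zero, Ne, pow_eq_one_iff_of_nonneg (norm_nonneg z) two_ne_zero]
  exact hz2 ((mul_eq_zero.1 hre).resolve_right hpos.ne')

end Complex

lemma norm_eq_one_of_palindromicEval_eq_zero {n : ℕ} (hn : 2 ≤ n) {ρ z : ℂ}
    (hρ : ((n : ℂ) - 1) * ρ = -1) (hz : palindromicEval n ρ z = 0) : ‖z‖ = 1 := by
  by_cases hzn : z ^ n = 1
  · exact Complex.norm_eq_one_of_pow_eq_one hzn (by omega)
  have hζ := Complex.isPrimitiveRoot_exp n (by omega)
  have hz1 : z - 1 ≠ 0 := by rintro h; rw [sub_eq_zero.1 h, one_pow] at hzn; exact hzn rfl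
  have hmul := palindromicEval_mul_sub_one (n := n) (by omega) ρ z
  rw [hz, zero_mul] at hmul
  have hquot : (z + 1) / (z - 1) = n * (z ^ n + 1) / (z ^ n - 1) := by
    rw [div_eq_div_iff hz1 (sub_ne_zero.2 hzn)]
    linear_combination ((n : ℂ) - 1) * hmul + 2 * (z ^ n - z) * hρ
  have hsum := hζ.sum_add_div_sub_pow hzn
  obtain ⟨m, rfl⟩ := Nat.exists_eq_add_of_le' hn
  rw [sum_range_succ', pow_zero, hquot.symm, add_eq_right] at hsum
  refine Complex.norm_eq_one_of_sum_add_div_sub_eq_zero nonempty_range_add_one (fun k _ => ?_) hsum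
  rw [norm_pow, hζ.norm'_eq_one (by omega), one_pow]

/-- For a prime `n ≥ 3`, `η = e^{2π√-1/n}` and `ρ = -1/(n-1)`,
the polynomial `p(z) = z^n + 2ρ·Σ_{i=1}^{n-1} z^i + 1` has both `1` and `-1`
as zeros, all its zeros lie on the unit circle, and no primitive `n`-th root
of unity `η^k`, `k ∈ {1, …, n-1}`, is a zero. -/
theorem zeros_rho_eq_neg_inv (n : ℕ) (hn : n.Prime) (hn3 : 3 ≤ n) (η : ℂ)
    (hη : η = Complex.exp (2 * Real.pi * Complex.I / n)) (ρ : ℝ)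
    (hρ : ρ = -(1 / ((n : ℝ) - 1))) :
    ((1 : ℂ) ^ n + 2 * (ρ : ℂ) * ∑ i ∈ Finset.Icc 1 (n - 1), (1 : ℂ) ^ i + 1 = 0) ∧
    ((-1 : ℂ) ^ n + 2 * (ρ : ℂ) * ∑ i ∈ Finset.Icc 1 (n - 1), (-1 : ℂ) ^ i + 1 = 0) ∧
    (∀ z : ℂ, z ^ n + 2 * (ρ : ℂ) * ∑ i ∈ Finset.Icc 1 (n - 1), z ^ i + 1 = 0 →
      ‖z‖ = 1) ∧
    (∀ k ∈ Finset.Icc 1 (n - 1),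
      (η ^ k) ^ n + 2 * (ρ : ℂ) * ∑ i ∈ Finset.Icc 1 (n - 1), (η ^ k) ^ i + 1 ≠ 0) := by
  have hn1 : (0 : ℝ) < n - 1 := sub_pos.2 (by exact_mod_cast hn.one_lt)
  have hρn : ((n : ℂ) - 1) * ρ = -1 := by
    have : ((n : ℝ) - 1) * ρ = -1 := by rw [hρ]; field_simp
    exact_mod_cast this
  have hρneg : ρ < 0 := by
    rw [hρ, neg_lt_zero]
    positivity
  have hprim : IsPrimitiveRoot η n := hη ▸ Complex.isPrimitiveRoot_exp n hn.ne_zero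
  refine ⟨?_, palindromicEval_neg_one (hn.odd_of_ne_two (by omega)) _,
    fun z => norm_eq_one_of_palindromicEval_eq_zero hn.two_le hρn, fun k hk => ?_⟩
  · change palindromicEval n (ρ : ℂ) 1 = 0
    rw [palindromicEval_one hn.one_le]
    linear_combination 2 * hρn
  · change palindromicEval n (ρ : ℂ) (η ^ k) ≠ 0
    rw [mem_Icc] at hk
    have hpow : (η ^ k) ^ n = 1 := by rw [pow_right_comm, hprim.pow_eq_one, one_pow]
    rw [palindromicEval_of_pow_eq_one hn.one_le _ hpow
      (hprim.pow_ne_one_of_pos_of_lt (by omega) (by omega))]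
    exact_mod_cast (by linarith : (0 : ℝ) < 2 - 2 * ρ).ne'
end

section
/- Let d ≥ 2 be an integer and X = (ℤ/2ℤ)^d. For j ∈ {1, …, d−1}, set ρ_j = 1 − 2j/d. Then for every x ∈ X, Σ_{z∈X, |z|=1} (ρ_j·K_j(|x|) − K_j(|x⊕z|))² = (1 − |x|/d)·|x|·(K_j(|x|−1) − K_j(|x|+1))², where K_i are the Krawtchouk polynomial values with n = 2. -/
/-- The Krawtchouk polynomial value for `n = 2`:
`K_i(j) = Σ_{l=0}^{i} (-1)^l C(j,l) C(d-j, i-l)`. -/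
noncomputable def kraw2 (d i j : ℕ) : ℝ :=
  ∑ l ∈ Finset.range (i + 1),
    (-1 : ℝ) ^ l * (j.choose l) * ((d - j).choose (i - l))

lemma idA (n l : ℕ) :
    ((n : ℝ) + 1) * (n.choose l) = ((l : ℝ) + 1) * ((n+1).choose (l+1)) := by
  have h : ((n:ℝ) + 1) * (n.choose l) = ((n+1).choose (l+1) : ℕ) * ((l:ℝ)+1) := by
    exact_mod_cast Nat.add_one_mul_choose_eq n l
  linarith

lemma idB (n l : ℕ) :
    ((n : ℝ) + 1) * (n.choose l) = ((n : ℝ) + 1 - l) * ((n+1).choose l) := by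
  cases l with
  | zero => simp
  | succ m =>
    have h1 : ((n:ℝ) + 1) * (n.choose m) = ((n+1).choose (m+1) : ℕ) * ((m:ℝ)+1) := by
      exact_mod_cast Nat.add_one_mul_choose_eq n m
    have h2 : (((n+1).choose (m+1) : ℕ) : ℝ) = (n.choose m : ℕ) + (n.choose (m+1) : ℕ) := by
      exact_mod_cast Nat.choose_succ_succ' n m
    push_cast
    linear_combination (-1 : ℝ) * h1 - ((n:ℝ)+1) * h2

lemma kraw2_core (a b j : ℕ) :
    ((a:ℝ)+1) * kraw2 (a+b+2) j a + ((b:ℝ)+1) * kraw2 (a+b+2) j (a+2)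
      = ((a:ℝ)+(b:ℝ)+2-2*(j:ℝ)) * kraw2 (a+b+2) j (a+1) := by
  have e1 : a + b + 2 - a = b + 2 := by omega
  have e2 : a + b + 2 - (a+1) = b + 1 := by omega
  have e3 : a + b + 2 - (a+2) = b := by omega
  simp only [kraw2, e1, e2, e3]
  have hA : ((a:ℝ)+1) * ∑ l ∈ Finset.range (j+1),
        (-1:ℝ)^l * (a.choose l) * ((b+2).choose (j-l))
      = ∑ l ∈ Finset.range (j+1),
        (-1:ℝ)^l * ((a:ℝ)+1-2*l) * ((a+1).choose l) * ((b+1).choose (j-l)) := by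
    rw [Finset.mul_sum]
    -- split Pascal on (b+2).choose (j-l)
    have step1 : ∑ l ∈ Finset.range (j+1),
          ((a:ℝ)+1) * ((-1:ℝ)^l * (a.choose l) * ((b+2).choose (j-l)))
        = (∑ l ∈ Finset.range (j+1),
            (-1:ℝ)^l * (((a:ℝ)+1) * (a.choose l)) * ((b+1).choose (j-l)))
          + ∑ l ∈ Finset.range j,
            (-1:ℝ)^l * (((a:ℝ)+1) * (a.choose l)) * ((b+1).choose (j-(l+1))) := by
      rw [Finset.sum_range_succ, Finset.sum_range_succ]
      have htop : ((a:ℝ)+1) * ((-1:ℝ)^j * (a.choose j) * ((b+2).choose (j-j)))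
          = (-1:ℝ)^j * (((a:ℝ)+1) * (a.choose j)) * ((b+1).choose (j-j)) := by
        simp [Nat.sub_self]
        ring
      have hsum : ∑ l ∈ Finset.range j,
            ((a:ℝ)+1) * ((-1:ℝ)^l * (a.choose l) * ((b+2).choose (j-l)))
          = ∑ l ∈ Finset.range j,
            ((-1:ℝ)^l * (((a:ℝ)+1) * (a.choose l)) * ((b+1).choose (j-l))
             + (-1:ℝ)^l * (((a:ℝ)+1) * (a.choose l)) * ((b+1).choose (j-(l+1)))) := by
        apply Finset.sum_congr rfl
        intro l hl
        have hlj : l < j := Finset.mem_range.mp hl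
        have hp : (b+2).choose (j-l) = (b+1).choose (j-(l+1)) + (b+1).choose (j-l) := by
          have h4 : j - l = (j - (l+1)) + 1 := by omega
          rw [h4, Nat.choose_succ_succ' (b+1) (j-(l+1))]
        rw [hp]
        push_cast
        ring
      rw [hsum, Finset.sum_add_distrib, htop]
      ring
    rw [step1]
    -- first sum via idB, second via idA + reindex
    have first : ∑ l ∈ Finset.range (j+1),
          (-1:ℝ)^l * (((a:ℝ)+1) * (a.choose l)) * ((b+1).choose (j-l))
        = ∑ l ∈ Finset.range (j+1),
          (-1:ℝ)^l * (((a:ℝ)+1-l) * ((a+1).choose l)) * ((b+1).choose (j-l)) := by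
      apply Finset.sum_congr rfl
      intro l _
      rw [idB a l]
    have second : ∑ l ∈ Finset.range j,
          (-1:ℝ)^l * (((a:ℝ)+1) * (a.choose l)) * ((b+1).choose (j-(l+1)))
        = - ∑ l ∈ Finset.range (j+1),
          (-1:ℝ)^l * ((l:ℝ) * ((a+1).choose l)) * ((b+1).choose (j-l)) := by
      rw [Finset.sum_range_succ' (fun l => (-1:ℝ)^l * ((l:ℝ) * ((a+1).choose l)) * ((b+1).choose (j-l))) j]
      simp only [Nat.cast_zero, zero_mul, mul_zero, pow_zero, one_mul, add_zero]
      rw [← Finset.sum_neg_distrib]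
      apply Finset.sum_congr rfl
      intro l _
      rw [idA a l]
      push_cast
      ring
    rw [first, second, ← sub_eq_add_neg, ← Finset.sum_sub_distrib]
    apply Finset.sum_congr rfl
    intro l _
    ring
  have hB : ((b:ℝ)+1) * ∑ l ∈ Finset.range (j+1),
        (-1:ℝ)^l * ((a+2).choose l) * (b.choose (j-l))
      = ∑ l ∈ Finset.range (j+1),
        (-1:ℝ)^l * ((b:ℝ)+1-2*((j:ℝ)-l)) * ((a+1).choose l) * ((b+1).choose (j-l)) := by
    rw [Finset.mul_sum]
    have step1 : ∑ l ∈ Finset.range (j+1),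
          ((b:ℝ)+1) * ((-1:ℝ)^l * ((a+2).choose l) * (b.choose (j-l)))
        = (∑ l ∈ Finset.range (j+1),
            (-1:ℝ)^l * ((a+1).choose l : ℕ) * (((b:ℝ)+1) * (b.choose (j-l))))
          + ∑ l ∈ Finset.range j,
            (-1:ℝ)^(l+1) * ((a+1).choose l : ℕ) * (((b:ℝ)+1) * (b.choose (j-(l+1)))) := by
      rw [Finset.sum_range_succ' (fun l => ((b:ℝ)+1) * ((-1:ℝ)^l * ((a+2).choose l) * (b.choose (j-l)))) j]
      rw [Finset.sum_range_succ' (fun l => (-1:ℝ)^l * ((a+1).choose l : ℕ) * (((b:ℝ)+1) * (b.choose (j-l)))) j]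
      have hterm : ∀ l ∈ Finset.range j,
          ((b:ℝ)+1) * ((-1:ℝ)^(l+1) * ((a+2).choose (l+1)) * (b.choose (j-(l+1))))
          = (-1:ℝ)^(l+1) * ((a+1).choose (l+1) : ℕ) * (((b:ℝ)+1) * (b.choose (j-(l+1))))
            + (-1:ℝ)^(l+1) * ((a+1).choose l : ℕ) * (((b:ℝ)+1) * (b.choose (j-(l+1)))) := by
        intro l _
        have hp : (a+2).choose (l+1) = (a+1).choose l + (a+1).choose (l+1) :=
          Nat.choose_succ_succ' (a+1) l
        rw [hp]
        push_cast
        ring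
      rw [Finset.sum_congr rfl hterm, Finset.sum_add_distrib]
      simp only [pow_zero, one_mul, Nat.choose_zero_right, Nat.cast_one, Nat.sub_zero]
      ring
    rw [step1]
    have hU : ∑ l ∈ Finset.range (j+1),
          (-1:ℝ)^l * ((a+1).choose l : ℕ) * (((b:ℝ)+1) * (b.choose (j-l)))
        = ∑ l ∈ Finset.range (j+1),
          (-1:ℝ)^l * (((b:ℝ)+1-((j:ℝ)-l)) * ((a+1).choose l : ℕ)) * ((b+1).choose (j-l)) := by
      apply Finset.sum_congr rfl
      intro l hl
      have hlj : l ≤ j := by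
        have := Finset.mem_range.mp hl; omega
      have hc : ((j - l : ℕ) : ℝ) = (j:ℝ) - l := by
        push_cast [Nat.cast_sub hlj]; ring
      rw [idB b (j-l), hc]
      ring
    have hV : ∑ l ∈ Finset.range j,
          (-1:ℝ)^(l+1) * ((a+1).choose l : ℕ) * (((b:ℝ)+1) * (b.choose (j-(l+1))))
        = - ∑ l ∈ Finset.range (j+1),
          (-1:ℝ)^l * (((j:ℝ)-l) * ((a+1).choose l : ℕ)) * ((b+1).choose (j-l)) := by
      rw [Finset.sum_range_succ]
      have htop : (-1:ℝ)^j * (((j:ℝ)-j) * ((a+1).choose j : ℕ)) * ((b+1).choose (j-j)) = 0 := by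
        simp
      rw [htop, add_zero, ← Finset.sum_neg_distrib]
      apply Finset.sum_congr rfl
      intro l hl
      have hlj : l < j := Finset.mem_range.mp hl
      have h4 : (j - (l+1)) + 1 = j - l := by omega
      have hc : ((j - (l+1) : ℕ) : ℝ) + 1 = (j:ℝ) - l := by
        have : (l:ℝ) + 1 ≤ j := by exact_mod_cast Nat.succ_le_of_lt hlj
        push_cast [Nat.cast_sub (by omega : l + 1 ≤ j)]
        ring
      rw [idA b (j-(l+1)), h4, hc]
      push_cast
      ring
    rw [hU, hV, ← sub_eq_add_neg, ← Finset.sum_sub_distrib]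
    apply Finset.sum_congr rfl
    intro l _
    ring
  rw [hA, hB, ← Finset.sum_add_distrib, Finset.mul_sum]
  apply Finset.sum_congr rfl
  intro l _
  ring


lemma kraw2_zero (d j : ℕ) : kraw2 d j 0 = (d.choose j : ℝ) := by
  rw [kraw2]
  rw [Finset.sum_eq_single 0]
  · simp
  · intro l hl hne
    obtain ⟨m, rfl⟩ : ∃ m, l = m + 1 := ⟨l - 1, by omega⟩
    simp [Nat.choose_zero_succ]
  · intro h
    exact absurd (Finset.mem_range.mpr (by omega)) h

lemma kraw2_one (d j : ℕ) (hj1 : 1 ≤ j) :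
    kraw2 d j 1 = ((d-1).choose j : ℝ) - ((d-1).choose (j-1) : ℝ) := by
  obtain ⟨m, rfl⟩ : ∃ m, j = m + 1 := ⟨j - 1, by omega⟩
  rw [kraw2]
  rw [Finset.sum_range_succ' (fun l => (-1:ℝ)^l * ((1:ℕ).choose l) * ((d-1).choose (m+1-l))) (m+1)]
  have hrest : ∑ l ∈ Finset.range (m+1),
      (-1:ℝ)^(l+1) * ((1:ℕ).choose (l+1)) * ((d-1).choose (m+1-(l+1)))
      = -((d-1).choose m : ℝ) := by
    rw [Finset.sum_eq_single 0]
    · norm_num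
    · intro l hl hne
      have : (1:ℕ).choose (l+1) = 0 := Nat.choose_eq_zero_of_lt (by omega)
      simp [this]
    · intro h
      exact absurd (Finset.mem_range.mpr (by omega)) h
  rw [hrest]
  simp
  ring
lemma kraw2_last (d j : ℕ) : kraw2 d j d = (-1:ℝ)^j * (d.choose j : ℝ) := by
  rw [kraw2, Nat.sub_self]
  rw [Finset.sum_eq_single j]
  · simp
  · intro l hl hne
    have hlj : l < j := by
      have := Finset.mem_range.mp hl; omega
    have : (0:ℕ).choose (j - l) = 0 := Nat.choose_eq_zero_of_lt (by omega)
    simp [this]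
  · intro h
    exact absurd (Finset.mem_range.mpr (by omega)) h

lemma kraw2_penult (d j : ℕ) (hj1 : 1 ≤ j) (hd : 1 ≤ d) :
    kraw2 d j (d-1) = (-1:ℝ)^j * ((d-1).choose j : ℝ)
      - (-1:ℝ)^j * ((d-1).choose (j-1) : ℝ) := by
  have e1 : d - (d-1) = 1 := by omega
  rw [kraw2, e1]
  obtain ⟨m, rfl⟩ : ∃ m, j = m + 1 := ⟨j - 1, by omega⟩
  rw [Finset.sum_range_succ]
  have htop : (-1:ℝ)^(m+1) * ((d-1).choose (m+1)) * ((1:ℕ).choose (m+1-(m+1)))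
      = (-1:ℝ)^(m+1) * ((d-1).choose (m+1)) := by
    simp
  have hrest : ∑ l ∈ Finset.range (m+1),
      (-1:ℝ)^l * ((d-1).choose l) * ((1:ℕ).choose (m+1-l))
      = (-1:ℝ)^m * ((d-1).choose m : ℝ) := by
    rw [Finset.sum_eq_single m]
    · simp
    · intro l hl hne
      have hlm : l < m := by
        have := Finset.mem_range.mp hl; omega
      have : (1:ℕ).choose (m+1-l) = 0 := Nat.choose_eq_zero_of_lt (by omega)
      simp [this]
    · intro h
      exact absurd (Finset.mem_range.mpr (by omega)) h
  rw [htop, hrest]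
  simp
  ring

lemma kraw2_rec (d j k : ℕ) (hj1 : 1 ≤ j) (hjd : j ≤ d - 1) (hd : 2 ≤ d) (hk : k ≤ d) :
    (k:ℝ) * kraw2 d j (k-1) + ((d:ℝ) - k) * kraw2 d j (k+1)
      = ((d:ℝ) - 2*j) * kraw2 d j k := by
  rcases Nat.eq_zero_or_pos k with rfl | hk0
  · simp only [Nat.cast_zero, zero_mul, zero_add, sub_zero, Nat.zero_sub, zero_add]
    rw [kraw2_one d j hj1, kraw2_zero d j]
    obtain ⟨c, rfl⟩ : ∃ c, d = c + 1 := ⟨d - 1, by omega⟩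
    obtain ⟨m, rfl⟩ : ∃ m, j = m + 1 := ⟨j - 1, by omega⟩
    have h1 := idB c (m+1)
    have h2 := idA c m
    simp only [Nat.add_sub_cancel]
    push_cast at h1 h2 ⊢
    linear_combination h1 - h2
  rcases eq_or_lt_of_le hk with rfl | hkd
  · have : (k:ℝ) - (k:ℕ) = 0 := by ring
    rw [sub_self, zero_mul, add_zero]
    rw [kraw2_penult k j hj1 (by omega), kraw2_last k j]
    obtain ⟨c, rfl⟩ : ∃ c, k = c + 1 := ⟨k - 1, by omega⟩
    obtain ⟨m, rfl⟩ : ∃ m, j = m + 1 := ⟨j - 1, by omega⟩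
    have h1 := idB c (m+1)
    have h2 := idA c m
    simp only [Nat.add_sub_cancel]
    push_cast at h1 h2 ⊢
    linear_combination ((-1:ℝ)^(m+1)) * h1 - ((-1:ℝ)^(m+1)) * h2
  · obtain ⟨a, rfl⟩ : ∃ a, k = a + 1 := ⟨k - 1, by omega⟩
    obtain ⟨b, rfl⟩ : ∃ b, d = a + b + 2 := ⟨d - a - 2, by omega⟩
    have h := kraw2_core a b j
    simp only [Nat.add_sub_cancel]
    push_cast at h ⊢
    linear_combination h


/-- for `d ≥ 2`, `j ∈ {1,…,d-1}`, `ρ_j = 1 - 2j/d` and any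
`x ∈ (ℤ/2ℤ)^d`,
`Σ_{z : |z|=1} (ρ_j K_j(|x|) - K_j(|x⊕z|))² =
  (1 - |x|/d)·|x|·(K_j(|x|-1) - K_j(|x|+1))²`. -/
theorem kraw_identity_simple_walk (d : ℕ) (hd : 2 ≤ d)
    (j : ℕ) (hj : j ∈ Finset.Icc 1 (d - 1)) (x : Fin d → ZMod 2) :
    ∑ z ∈ Finset.univ.filter (fun z : Fin d → ZMod 2 => hammingNorm z = 1),
      ((1 - 2 * (j : ℝ) / d) * kraw2 d j (hammingNorm x) -
        kraw2 d j (hammingNorm (x + z))) ^ 2 =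
      (1 - (hammingNorm x : ℝ) / d) * (hammingNorm x : ℝ) *
        (kraw2 d j (hammingNorm x - 1) - kraw2 d j (hammingNorm x + 1)) ^ 2 := by
  obtain ⟨hj1, hjd⟩ := Finset.mem_Icc.mp hj
  set k := hammingNorm x with hkdef
  have hk_le : k ≤ d := by
    have h := hammingNorm_le_card_fintype (x := x)
    simpa using h
  have hone : ∀ u : ZMod 2, u ≠ 0 → u = 1 := by decide
  have hnorm_eq : ∀ z : Fin d → ZMod 2,
      hammingNorm z = (Finset.univ.filter fun i => z i ≠ 0).card := fun z => rfl
  have himg : (Finset.univ.filter fun z : Fin d → ZMod 2 => hammingNorm z = 1)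
      = Finset.univ.image (fun i : Fin d => (Pi.single i 1 : Fin d → ZMod 2)) := by
    ext z
    simp only [Finset.mem_filter, Finset.mem_univ, true_and, Finset.mem_image]
    constructor
    · intro hz
      have hz' : (Finset.univ.filter fun i => z i ≠ 0).card = 1 := hz
      obtain ⟨i, hi⟩ := Finset.card_eq_one.mp hz'
      refine ⟨i, ?_⟩
      funext a
      by_cases ha : a = i
      · subst ha
        have hmem : a ∈ Finset.univ.filter fun i => z i ≠ 0 := by
          rw [hi]; exact Finset.mem_singleton_self a
        have hza : z a ≠ 0 := (Finset.mem_filter.mp hmem).2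
        rw [Pi.single_eq_same, hone (z a) hza]
      · have hnm : a ∉ Finset.univ.filter fun i => z i ≠ 0 := by
          rw [hi]; simp [ha]
        have hza : z a = 0 := by
          by_contra h
          exact hnm (Finset.mem_filter.mpr ⟨Finset.mem_univ a, h⟩)
        rw [Pi.single_eq_of_ne ha, hza]
    · rintro ⟨i, rfl⟩
      simp only [hnorm_eq]
      have hset : (Finset.univ.filter fun a => (Pi.single i (1:ZMod 2) : Fin d → ZMod 2) a ≠ 0) = {i} := by
        ext a
        simp only [Finset.mem_filter, Finset.mem_univ, true_and, Finset.mem_singleton]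
        constructor
        · intro h
          by_contra ha
          exact h (by rw [Pi.single_eq_of_ne ha])
        · rintro rfl
          rw [Pi.single_eq_same]
          exact one_ne_zero
      rw [hset, Finset.card_singleton]
  have hinj : ∀ i ∈ (Finset.univ : Finset (Fin d)), ∀ i' ∈ Finset.univ,
      (Pi.single i (1:ZMod 2) : Fin d → ZMod 2) = Pi.single i' 1 → i = i' := by
    intro i _ i' _ h
    by_contra hne
    have hc := congrFun h i
    rw [Pi.single_eq_same, Pi.single_eq_of_ne hne] at hc
    exact one_ne_zero hc
  rw [himg, Finset.sum_image hinj]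
  have hflip : ∀ i : Fin d, hammingNorm (x + Pi.single i 1)
      = if x i ≠ 0 then k - 1 else k + 1 := by
    intro i
    rw [hnorm_eq (x + Pi.single i 1)]
    by_cases hxi : x i = 0
    · rw [if_neg (by simpa using hxi)]
      have hset : (Finset.univ.filter fun a => (x + Pi.single i 1 : Fin d → ZMod 2) a ≠ 0)
          = insert i (Finset.univ.filter fun a => x a ≠ 0) := by
        ext a
        simp only [Finset.mem_filter, Finset.mem_univ, true_and, Finset.mem_insert,
          Pi.add_apply]
        by_cases ha : a = i
        · subst ha
          rw [Pi.single_eq_same, hxi]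
          simp [show (0 + 1 : ZMod 2) ≠ 0 by decide]
        · rw [Pi.single_eq_of_ne ha, add_zero]
          simp [ha]
      rw [hset, Finset.card_insert_of_notMem (by simp [hxi]), ← hnorm_eq x, ← hkdef]
    · rw [if_pos hxi]
      have hset : (Finset.univ.filter fun a => (x + Pi.single i 1 : Fin d → ZMod 2) a ≠ 0)
          = (Finset.univ.filter fun a => x a ≠ 0).erase i := by
        ext a
        simp only [Finset.mem_filter, Finset.mem_univ, true_and, Finset.mem_erase,
          Pi.add_apply]
        by_cases ha : a = i
        · subst ha
          rw [Pi.single_eq_same, hone (x a) hxi]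
          simp [show ¬((1 + 1 : ZMod 2) ≠ 0) by decide]
        · rw [Pi.single_eq_of_ne ha, add_zero]
          simp [ha]
      rw [hset, Finset.card_erase_of_mem (Finset.mem_filter.mpr ⟨Finset.mem_univ i, hxi⟩),
        ← hnorm_eq x, ← hkdef]
  have hsplit := Finset.sum_filter_add_sum_filter_not (Finset.univ : Finset (Fin d))
    (fun i => x i ≠ 0)
    (fun i => ((1 - 2 * (j : ℝ) / d) * kraw2 d j k - kraw2 d j (hammingNorm (x + Pi.single i 1))) ^ 2)
  rw [← hsplit]
  have c1 : ∑ i ∈ Finset.univ.filter (fun i => x i ≠ 0),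
      ((1 - 2 * (j : ℝ) / d) * kraw2 d j k - kraw2 d j (hammingNorm (x + Pi.single i 1))) ^ 2
      = (k : ℝ) * ((1 - 2 * (j : ℝ) / d) * kraw2 d j k - kraw2 d j (k - 1)) ^ 2 := by
    rw [Finset.sum_congr rfl (fun i hi => by
      rw [hflip i, if_pos (Finset.mem_filter.mp hi).2]), Finset.sum_const]
    rw [nsmul_eq_mul]
    rfl
  have hcard2 : (Finset.univ.filter (fun i => ¬ x i ≠ 0)).card = d - k := by
    have h := Finset.card_filter_add_card_filter_not
      (s := (Finset.univ : Finset (Fin d))) (p := fun i => x i ≠ 0)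
    simp only [Finset.card_univ, Fintype.card_fin] at h
    have hkc : (Finset.univ.filter (fun i => x i ≠ 0)).card = k := rfl
    omega
  have c2 : ∑ i ∈ Finset.univ.filter (fun i => ¬ x i ≠ 0),
      ((1 - 2 * (j : ℝ) / d) * kraw2 d j k - kraw2 d j (hammingNorm (x + Pi.single i 1))) ^ 2
      = ((d : ℝ) - k) * ((1 - 2 * (j : ℝ) / d) * kraw2 d j k - kraw2 d j (k + 1)) ^ 2 := by
    rw [Finset.sum_congr rfl (fun i hi => by
      rw [hflip i, if_neg (Finset.mem_filter.mp hi).2]), Finset.sum_const]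
    rw [nsmul_eq_mul, hcard2]
    push_cast [Nat.cast_sub hk_le]
    ring
  rw [c1, c2]
  have key := kraw2_rec d j k hj1 hjd hd hk_le
  have hd0 : (d : ℝ) ≠ 0 := by
    have : 0 < d := by omega
    exact_mod_cast this.ne'
  set A := kraw2 d j (k - 1)
  set B := kraw2 d j (k + 1)
  set K := kraw2 d j k
  have h2 : (1 - 2 * (j:ℝ) / d) * K = ((k:ℝ) * A + ((d:ℝ) - k) * B) / d := by
    field_simp
    linarith [key]
  rw [h2]
  field_simp
  ring
end

section
/- Let n ≥ 3 be an odd integer and η = e^{2π√−1/n}. Then for every l ∈ {1, …, n−1}, Σ_{k=0}^{n−1} η^{lk}/(1 + η^k) = (n/2)·(−1)^{l−1}. -/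
/-!
Write `S m = ∑_{k<n} ζ^{mk}/(1+ζ^k)`. Since `ζ^{mk}/(1+ζ^k) + ζ^{(m+1)k}/(1+ζ^k) = ζ^{mk}`,
`S m + S (m+1)` is a geometric sum over a root of unity: it is `n` for `m = 0` and `0` for
`0 < m < n`. Hence `S m = (-1)^m (S 0 - n)` for `1 ≤ m ≤ n`, and as `S n = S 0` with `n` odd,
`S 0 = n/2`.
-/

open Finset

namespace IsPrimitiveRoot

variable {R : Type*} [CommRing R] {ζ : R} {n : ℕ}

theorem one_add_pow_ne_zero [NeZero (2 : R)] (h : IsPrimitiveRoot ζ n) (hn : Odd n) (k : ℕ) :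
    1 + ζ ^ k ≠ 0 := by
  intro hk
  have hneg : ζ ^ k = -1 := eq_neg_of_add_eq_zero_right hk
  have hdvd : n ∣ k := by
    refine hn.coprime_two_right.dvd_of_dvd_mul_left ((h.pow_eq_one_iff_dvd _).mp ?_)
    rw [pow_mul', hneg, neg_one_sq]
  rw [(h.pow_eq_one_iff_dvd k).mpr hdvd, one_add_one_eq_two] at hk
  exact two_ne_zero hk

theorem sum_pow_mul_eq_zero [IsDomain R] (h : IsPrimitiveRoot ζ n) {m : ℕ} (hm : ¬n ∣ m) :
    ∑ k ∈ range n, ζ ^ (m * k) = 0 := by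
  have hne : 1 - ζ ^ m ≠ 0 := sub_ne_zero.mpr fun h1 => hm ((h.pow_eq_one_iff_dvd m).mp h1.symm)
  refine eq_zero_of_ne_zero_of_mul_left_eq_zero hne ?_
  simp_rw [pow_mul]
  rw [mul_neg_geom_sum, ← pow_mul, pow_mul', h.pow_eq_one, one_pow, sub_self]

end IsPrimitiveRoot

section

variable {K : Type*} [Field K]

def sumPowDivOneAddPow (ζ : K) (n m : ℕ) : K :=
  ∑ k ∈ range n, ζ ^ (m * k) / (1 + ζ ^ k)

variable {ζ : K} {n : ℕ}

theorem sumPowDivOneAddPow_add_succ (hζ : ∀ k, 1 + ζ ^ k ≠ 0) (m : ℕ) :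
    sumPowDivOneAddPow ζ n m + sumPowDivOneAddPow ζ n (m + 1) = ∑ k ∈ range n, ζ ^ (m * k) := by
  rw [sumPowDivOneAddPow, sumPowDivOneAddPow, ← sum_add_distrib]
  refine sum_congr rfl fun k _ => ?_
  rw [← add_div, div_eq_iff (hζ k), add_mul, one_mul, pow_add]
  ring

theorem sumPowDivOneAddPow_self (h : ζ ^ n = 1) :
    sumPowDivOneAddPow ζ n n = sumPowDivOneAddPow ζ n 0 := by
  simp only [sumPowDivOneAddPow, pow_mul, h, one_pow, zero_mul, pow_zero]

theorem IsPrimitiveRoot.sumPowDivOneAddPow_eq_neg_one_pow_mul (h : IsPrimitiveRoot ζ n)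
    (hζ : ∀ k, 1 + ζ ^ k ≠ 0) {m : ℕ} (hm : 1 ≤ m) (hmn : m ≤ n) :
    sumPowDivOneAddPow ζ n m = (-1) ^ m * (sumPowDivOneAddPow ζ n 0 - n) := by
  induction m, hm using Nat.le_induction with
  | base =>
    have h0 := sumPowDivOneAddPow_add_succ (n := n) hζ 0
    simp only [zero_mul, pow_zero, sum_const, card_range, nsmul_eq_mul, mul_one] at h0
    linear_combination h0
  | succ m hm ih =>
    have hrec := sumPowDivOneAddPow_add_succ (n := n) hζ m
    rw [h.sum_pow_mul_eq_zero (Nat.not_dvd_of_pos_of_lt (by omega) (by omega))] at hrec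
    linear_combination hrec - ih (by omega)

theorem IsPrimitiveRoot.sumPowDivOneAddPow_zero [NeZero (2 : K)] (h : IsPrimitiveRoot ζ n)
    (hn : Odd n) : sumPowDivOneAddPow ζ n 0 = n / 2 := by
  have key := h.sumPowDivOneAddPow_eq_neg_one_pow_mul (h.one_add_pow_ne_zero hn) hn.pos le_rfl
  rw [hn.neg_one_pow, sumPowDivOneAddPow_self h.pow_eq_one] at key
  rw [eq_div_iff two_ne_zero]
  linear_combination key

theorem IsPrimitiveRoot.sumPowDivOneAddPow_of_lt [NeZero (2 : K)] (h : IsPrimitiveRoot ζ n)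
    (hn : Odd n) {l : ℕ} (hl : 1 ≤ l) (hln : l < n) :
    sumPowDivOneAddPow ζ n l = n / 2 * (-1) ^ (l - 1) := by
  rw [h.sumPowDivOneAddPow_eq_neg_one_pow_mul (h.one_add_pow_ne_zero hn) hl hln.le,
    h.sumPowDivOneAddPow_zero hn]
  obtain ⟨j, rfl⟩ := Nat.exists_eq_add_of_le' hl
  rw [Nat.add_sub_cancel, pow_succ]
  field_simp
  ring

end

theorem sum_pow_div_one_add_root_general (n : ℕ) (hodd : Odd n) (η : ℂ)
    (hη : η = Complex.exp (2 * Real.pi * Complex.I / n))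
    (l : ℕ) (hl : l ∈ Finset.Icc 1 (n - 1)) :
    ∑ k ∈ Finset.range n, η ^ (l * k) / (1 + η ^ k) =
      (n : ℂ) / 2 * (-1 : ℂ) ^ (l - 1) := by
  have hprim : IsPrimitiveRoot η n := hη ▸ Complex.isPrimitiveRoot_exp n hodd.pos.ne'
  rw [Finset.mem_Icc] at hl
  exact hprim.sumPowDivOneAddPow_of_lt hodd hl.1 (by omega)

/-- for odd `n ≥ 3`, `η = e^{2π√-1/n}` and `l ∈ {1,…,n-1}`,
`Σ_{k=0}^{n-1} η^{lk}/(1+η^k) = (n/2)·(-1)^{l-1}`. -/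
theorem sum_pow_div_one_add_root (n : ℕ) (hn : 3 ≤ n) (hodd : Odd n) (η : ℂ)
    (hη : η = Complex.exp (2 * Real.pi * Complex.I / n))
    (l : ℕ) (hl : l ∈ Finset.Icc 1 (n - 1)) :
    ∑ k ∈ Finset.range n, η ^ (l * k) / (1 + η ^ k) =
      (n : ℂ) / 2 * (-1 : ℂ) ^ (l - 1) :=
  sum_pow_div_one_add_root_general n hodd η hη l hl
end

section
/- Let n ≥ 3 be an odd integer and η = e^{2π√−1/n}. Then Σ_{k=0}^{n−1} 1/((1 + η^k)(1 + η̄^k)) = n²/4, where η̄ denotes the complex conjugate of η. -/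
/-!
Since `n` is odd, `(1 + x) * ∑_{i<n} (-x)^i = 1 + x^n = 2` for every `n`-th root of unity `x`, so
`1 / (1 + ζ^k)` is the discrete Fourier series `2⁻¹ * ∑_{i<n} (-1)^i ζ^{ik}`. The sum in question is
then `∑_k |f(ζ^k)|^2` for this series `f`, and Parseval (orthogonality of the characters
`k ↦ ζ^{ik}`) gives `n * ∑_{i<n} |2⁻¹ (-1)^i|^2 = n^2 / 4`.
-/

open Finset

theorem geom_sum_eq_zero_of_pow_eq_one {K : Type*} [Field K] {x : K} {n : ℕ} (hx : x ^ n = 1)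
    (hx1 : x ≠ 1) : ∑ k ∈ range n, x ^ k = 0 := by
  rw [geom_sum_eq hx1, hx, sub_self, zero_div]

theorem inv_one_add_eq_alternating_geom_sum {K : Type*} [Field K] [NeZero (2 : K)] {x : K} {n : ℕ}
    (hn : Odd n) (hx : x ^ n = 1) :
    (1 + x)⁻¹ = 2⁻¹ * ∑ i ∈ range n, (-1) ^ i * x ^ i := by
  have h : (1 + x) * ∑ i ∈ range n, (-1) ^ i * x ^ i = 2 := by
    have := mul_neg_geom_sum (-1 * x) n
    rw [mul_pow, hn.neg_one_pow, hx] at this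
    simp_rw [← mul_pow]
    linear_combination this
  refine inv_eq_of_mul_eq_one_right ?_
  rw [mul_left_comm, h, inv_mul_cancel₀ two_ne_zero]

namespace IsPrimitiveRoot

variable {K : Type*} [Field K] {ζ : K} {n : ℕ}

theorem geom_sum_pow_mul_inv_pow (hζ : IsPrimitiveRoot ζ n) {i j : ℕ} (hi : i < n) (hj : j < n) :
    ∑ k ∈ range n, (ζ ^ i * ζ⁻¹ ^ j) ^ k = if i = j then (n : K) else 0 := by
  have hpow : (ζ ^ i * ζ⁻¹ ^ j) ^ n = 1 := by
    rw [mul_pow, pow_right_comm, pow_right_comm ζ⁻¹, inv_pow, hζ.pow_eq_one]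
    simp
  have hone : ζ ^ i * ζ⁻¹ ^ j = 1 ↔ i = j := by
    rw [inv_pow, mul_inv_eq_one₀ (pow_ne_zero _ (hζ.ne_zero (by omega)))]
    exact ⟨fun h => hζ.pow_inj hi hj h, fun h => h ▸ rfl⟩
  split_ifs with hij
  · simp only [hone.2 hij, one_pow, sum_const, card_range, nsmul_eq_mul, mul_one]
  · exact geom_sum_eq_zero_of_pow_eq_one hpow (hone.not.2 hij)

theorem sum_mul_sum_inv (hζ : IsPrimitiveRoot ζ n) (a b : ℕ → K) :
    ∑ k ∈ range n, (∑ i ∈ range n, a i * (ζ ^ k) ^ i) * (∑ j ∈ range n, b j * (ζ⁻¹ ^ k) ^ j) =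
      n * ∑ i ∈ range n, a i * b i := by
  calc _ = ∑ i ∈ range n, ∑ j ∈ range n, a i * b j * ∑ k ∈ range n, (ζ ^ i * ζ⁻¹ ^ j) ^ k := by
        simp_rw [sum_mul_sum, mul_sum]
        rw [sum_comm]
        refine sum_congr rfl fun i _ => ?_
        rw [sum_comm]
        refine sum_congr rfl fun j _ => sum_congr rfl fun k _ => ?_
        ring
    _ = ∑ i ∈ range n, a i * b i * n := by
        refine sum_congr rfl fun i hi => ?_
        rw [sum_congr rfl fun j hj =>
          by rw [hζ.geom_sum_pow_mul_inv_pow (mem_range.1 hi) (mem_range.1 hj)]]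
        simp [mul_ite, hi]
    _ = _ := by rw [← sum_mul, mul_comm]

theorem sum_one_div_one_add_pow_mul_one_add_inv_pow [NeZero (2 : K)] (hζ : IsPrimitiveRoot ζ n)
    (hn : Odd n) :
    ∑ k ∈ range n, 1 / ((1 + ζ ^ k) * (1 + ζ⁻¹ ^ k)) = (n : K) ^ 2 / 4 := by
  have hpow (k : ℕ) : (ζ ^ k) ^ n = 1 := by
    rw [pow_right_comm, hζ.pow_eq_one, one_pow]
  have hpow_inv (k : ℕ) : (ζ⁻¹ ^ k) ^ n = 1 := by
    rw [inv_pow, inv_pow, hpow, inv_one]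
  calc _ = ∑ k ∈ range n, 2⁻¹ * 2⁻¹ * ((∑ i ∈ range n, (-1) ^ i * (ζ ^ k) ^ i) *
          (∑ j ∈ range n, (-1) ^ j * (ζ⁻¹ ^ k) ^ j)) := by
        refine sum_congr rfl fun k _ => ?_
        rw [one_div, mul_inv, inv_one_add_eq_alternating_geom_sum hn (hpow k),
          inv_one_add_eq_alternating_geom_sum hn (hpow_inv k)]
        ring
    _ = 2⁻¹ * 2⁻¹ * (n * ∑ i ∈ range n, (-1) ^ i * (-1) ^ i) := by
        rw [← mul_sum, hζ.sum_mul_sum_inv]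
    _ = (n : K) ^ 2 / 4 := by
        simp only [← mul_pow, neg_one_mul, neg_neg, one_pow, sum_const, card_range, nsmul_eq_mul,
          mul_one, div_eq_mul_inv]
        rw [show (4 : K) = 2 * 2 by norm_num, mul_inv]
        ring

end IsPrimitiveRoot

theorem sum_inv_one_add_root_sq_general (n : ℕ) (hodd : Odd n) (η : ℂ)
    (hη : η = Complex.exp (2 * Real.pi * Complex.I / n)) :
    ∑ k ∈ Finset.range n,
      1 / ((1 + η ^ k) * (1 + (starRingEnd ℂ η) ^ k)) = (n : ℂ) ^ 2 / 4 := by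
  have hprim : IsPrimitiveRoot η n := hη ▸ Complex.isPrimitiveRoot_exp n hodd.pos.ne'
  rw [← Complex.inv_eq_conj (hprim.norm'_eq_one hodd.pos.ne')]
  exact hprim.sum_one_div_one_add_pow_mul_one_add_inv_pow hodd

/-- for odd `n ≥ 3` and `η = e^{2π√-1/n}`,
`Σ_{k=0}^{n-1} 1/((1+η^k)(1+η̄^k)) = n²/4`, where `η̄` is the complex
conjugate of `η`. -/
theorem sum_inv_one_add_root_sq (n : ℕ) (hn : 3 ≤ n) (hodd : Odd n) (η : ℂ)
    (hη : η = Complex.exp (2 * Real.pi * Complex.I / n)) :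
    ∑ k ∈ Finset.range n,
      1 / ((1 + η ^ k) * (1 + (starRingEnd ℂ η) ^ k)) = (n : ℂ) ^ 2 / 4 :=
  sum_inv_one_add_root_sq_general n hodd η hη
end
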